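/- Let T = {0,1,2,3} with its usual linear order <, let p := (1/2)δ₀ + (1/2)δ₃ and q := (1/2)δ₁ + (1/2)δ₂ (point masses). Then p ≠ q, yet the stochastic rank statistic computed with m = 1 is uniformly distributed on {0,1}: P(R = 0) = P(R = 1) = 1/2. Hence uniformity of the rank statistic for one particular value of m does not imply p = q. -/

import Mathlib

/-! The supports `{1, 2}` of `q` and `{0, 3}` of `p` interleave. Hence almost surely there are
no ties, `X₁ < X₀` holds exactly when `X₁ = 0`, and `R = 1[X₁ = 0]`, which takes each value
with probability `p 0 = p 3 = 1/2`. -/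

open MeasureTheory ProbabilityTheory
open scoped ENNReal

noncomputable section

/-- The uniform distribution on the interval `[0,1]`. -/
def unifIcc : Measure ℝ := volume.restrict (Set.Icc 0 1)

/-- The setup of the stochastic rank statistic: on a common probability space `(Ω, μ)`,
`X 0` has distribution `q`, the `X i` for `i ≠ 0` have distribution `p`, the `U i` are
uniform on `[0,1]`, and all of `X 0, …, X m, U 0, …, U m` are mutually independent.
(Mutual independence of the `2(m+1)` variables is recorded by independence of the pairs
`(X i, U i)` together with each pair having the product law.) -/
def IsRankSetup {T : Type} [MeasurableSpace T] {Ω : Type} [MeasurableSpace Ω]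
    (μ : Measure Ω) (p q : Measure T) (m : ℕ)
    (X : Fin (m + 1) → Ω → T) (U : Fin (m + 1) → Ω → ℝ) : Prop :=
  (∀ i, Measurable (X i)) ∧ (∀ i, Measurable (U i)) ∧
  iIndepFun (fun i ω => (X i ω, U i ω)) μ ∧
  μ.map (fun ω => (X 0 ω, U 0 ω)) = q.prod unifIcc ∧
  ∀ i : Fin (m + 1), i ≠ 0 → μ.map (fun ω => (X i ω, U i ω)) = p.prod unifIcc

open scoped Classical in
/-- The stochastic rank statistic
`R = ∑_{j=1}^m (1[X j ≺ X 0] + 1[X j = X 0 ∧ U j < U 0])`. -/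
def rankStat {T : Type} {Ω : Type} (r : T → T → Prop) (m : ℕ)
    (X : Fin (m + 1) → Ω → T) (U : Fin (m + 1) → Ω → ℝ) (ω : Ω) : ℕ :=
  ∑ j : Fin m, ((if r (X j.succ ω) (X 0 ω) then 1 else 0) +
    (if X j.succ ω = X 0 ω ∧ U j.succ ω < U 0 ω then 1 else 0))

instance : IsProbabilityMeasure unifIcc :=
  ⟨by simp [unifIcc, Real.volume_Icc]⟩

namespace PMF

variable {α : Type*}

theorem support_subset_pair (p : PMF α) {a b : α} (hab : a ≠ b) (h : p a + p b = 1) :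
    p.support ⊆ {a, b} := by
  classical
  intro c hc
  by_contra hcab
  have hca : c ≠ a := fun h => hcab (Or.inl h)
  have hcb : c ≠ b := fun h => hcab (Or.inr h)
  have hsum : ∑ x ∈ {a, b, c}, p x ≤ 1 := p.tsum_coe ▸ ENNReal.sum_le_tsum _
  rw [Finset.sum_insert (by simp [hab, hca.symm]), Finset.sum_pair hcb.symm, ← add_assoc, h]
    at hsum
  exact hc (nonpos_iff_eq_zero.1 <|
    (ENNReal.add_le_add_iff_left ENNReal.one_ne_top).1 (hsum.trans_eq (add_zero 1).symm))

variable [MeasurableSpace α] [MeasurableSingletonClass α] {Ω : Type*} [MeasurableSpace Ω]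
  {μ : Measure Ω} {X : Ω → α} {p : PMF α}

theorem ae_mem_support_of_map_eq (hX : AEMeasurable X μ) (h : μ.map X = p.toMeasure) :
    ∀ᵐ ω ∂μ, X ω ∈ p.support := by
  refine ae_of_ae_map hX ?_
  rw [h, ← p.restrict_toMeasure_support]
  exact ae_restrict_mem p.support_countable.measurableSet

theorem measure_preimage_singleton_of_map_eq (hX : Measurable X) (h : μ.map X = p.toMeasure)
    (a : α) : μ {ω | X ω = a} = p a := by
  rw [← p.toMeasure_apply_singleton a (measurableSet_singleton a), ← h,
    Measure.map_apply hX (measurableSet_singleton a)]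
  rfl

end PMF

namespace IsRankSetup

variable {T Ω : Type} [MeasurableSpace T] [MeasurableSpace Ω] {μ : Measure Ω} {p q : Measure T}
  {m : ℕ} {X : Fin (m + 1) → Ω → T} {U : Fin (m + 1) → Ω → ℝ}

theorem map_zero (h : IsRankSetup μ p q m X U) : μ.map (X 0) = q := by
  rw [← Measure.fst_map_prodMk (h.2.1 0), h.2.2.2.1, Measure.fst_prod]

theorem map_of_ne_zero (h : IsRankSetup μ p q m X U) {i : Fin (m + 1)} (hi : i ≠ 0) :
    μ.map (X i) = p := by
  rw [← Measure.fst_map_prodMk (h.2.1 i), h.2.2.2.2 i hi, Measure.fst_prod]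

end IsRankSetup

open scoped Classical in
theorem rankStat_one_of_ne {T Ω : Type} (r : T → T → Prop) {X : Fin (1 + 1) → Ω → T}
    {U : Fin (1 + 1) → Ω → ℝ} {ω : Ω} (h : X 1 ω ≠ X 0 ω) :
    rankStat r 1 X U ω = if r (X 1 ω) (X 0 ω) then 1 else 0 := by
  simp [rankStat, h]

theorem rankStat_one_of_interleaved {Ω : Type} {X : Fin (1 + 1) → Ω → Fin 4}
    {U : Fin (1 + 1) → Ω → ℝ} {ω : Ω} (h₀ : X 0 ω ∈ ({1, 2} : Set (Fin 4)))
    (h₁ : X 1 ω ∈ ({0, 3} : Set (Fin 4))) :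
    (rankStat (· < ·) 1 X U ω = 0 ↔ X 1 ω = 3) ∧ (rankStat (· < ·) 1 X U ω = 1 ↔ X 1 ω = 0) := by
  have key : ∀ x₀ x₁ : Fin 4, x₀ ∈ ({1, 2} : Set (Fin 4)) → x₁ ∈ ({0, 3} : Set (Fin 4)) →
      x₁ ≠ x₀ ∧ (¬x₁ < x₀ ↔ x₁ = 3) ∧ (x₁ < x₀ ↔ x₁ = 0) := by
    simp only [Set.mem_insert_iff, Set.mem_singleton_iff]
    decide
  obtain ⟨hne, hge, hlt⟩ := key _ _ h₀ h₁
  rw [rankStat_one_of_ne _ hne, ← hge, ← hlt]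
  split_ifs <;> simp_all

/-- **Remark (uniformity for a single `m` does not imply `p = q`).**  Let `T = {0,1,2,3}`
with its usual order, `p = (1/2)δ₀ + (1/2)δ₃` and `q = (1/2)δ₁ + (1/2)δ₂`.  Then `p ≠ q`,
yet the stochastic rank statistic computed with `m = 1` is uniformly distributed on
`{0, 1}`: `P(R = 0) = P(R = 1) = 1/2`. -/
theorem srs_uniform_single_m_counterexample
    (p q : PMF (Fin 4))
    (hp0 : p 0 = 2⁻¹) (hp3 : p 3 = 2⁻¹) (hq1 : q 1 = 2⁻¹) (hq2 : q 2 = 2⁻¹) :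
    p ≠ q ∧
      ∀ (Ω : Type) (_ : MeasurableSpace Ω) (μ : Measure Ω), IsProbabilityMeasure μ →
        ∀ (X : Fin (1 + 1) → Ω → Fin 4) (U : Fin (1 + 1) → Ω → ℝ),
          IsRankSetup μ p.toMeasure q.toMeasure 1 X U →
          μ {ω | rankStat (· < ·) 1 X U ω = 0} = 2⁻¹ ∧
          μ {ω | rankStat (· < ·) 1 X U ω = 1} = 2⁻¹ := by
  have hp : p.support ⊆ {0, 3} :=
    p.support_subset_pair (by decide) (by rw [hp0, hp3, ENNReal.inv_two_add_inv_two])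
  have hq : q.support ⊆ {1, 2} :=
    q.support_subset_pair (by decide) (by rw [hq1, hq2, ENNReal.inv_two_add_inv_two])
  refine ⟨fun hpq => ?_, fun Ω _ μ _ X U hX => ?_⟩
  · have hq0 : q 0 = 0 := (q.apply_eq_zero_iff 0).2 fun h => by simpa using hq h
    exact ENNReal.inv_ne_zero.2 ENNReal.ofNat_ne_top (hp0.symm.trans (hpq ▸ hq0))
  have hrank : ∀ᵐ ω ∂μ, (rankStat (· < ·) 1 X U ω = 0 ↔ X 1 ω = 3) ∧
      (rankStat (· < ·) 1 X U ω = 1 ↔ X 1 ω = 0) := by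
    filter_upwards [PMF.ae_mem_support_of_map_eq (hX.1 0).aemeasurable hX.map_zero,
      PMF.ae_mem_support_of_map_eq (hX.1 1).aemeasurable (hX.map_of_ne_zero one_ne_zero)]
      with ω h₀ h₁
    exact rankStat_one_of_interleaved (hq h₀) (hp h₁)
  have hlaw := PMF.measure_preimage_singleton_of_map_eq (hX.1 1) (hX.map_of_ne_zero one_ne_zero)
  constructor
  · rw [← hp3, ← hlaw]
    exact measure_congr (Filter.eventuallyEq_set.2 (hrank.mono fun _ h => h.1))
  · rw [← hp0, ← hlaw]
    exact measure_congr (Filter.eventuallyEq_set.2 (hrank.mono fun _ h => h.2))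

end
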